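/- arXiv:2506.17634 — 5 statements merged into one kernel-verified Lean document; each statement's English description precedes it below -/
import Mathlib

section
/- Let X_1, …, X_n be independent integrable real random variables and S, R > 0 constants such that E[X_i^k] ≤ k!·S²·R^{k−2}/2 for every i ∈ {1,…,n} and every integer k ≥ 2, and assume E[exp(λX_i)] < ∞ for every 0 < λ < 1/R. Then for every t ≥ 0, P[Σ_{i=1}^n (X_i − E[X_i]) ≥ t] ≤ exp(−t² / (2(n·S² + R·t))). -/
open MeasureTheory ProbabilityTheory

/-! By the Chernoff bound and independence,
`P[Σ (X_i - E X_i) ≥ t] ≤ e^{-λt} ∏ E[e^{λ(X_i - E X_i)}]`. For `0 < λ < 1/R`, expanding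
`E[e^{λX}] = Σ λ^k E[X^k] / k!` and bounding every term with `k ≥ 2` by the moment condition gives
the geometric series `λ²S²/(2(1 - λR))`, so `E[e^{λ(X - E X)}] ≤ exp(λ²S²/(2(1 - λR)))` because
`1 + x ≤ eˣ`. The expansion may be integrated term by term since the odd absolute moments are
controlled by the neighbouring even ones, `|x|^{2j+1} ≤ (x^{2j} + x^{2j+2})/2`. Finally
`λ = t/(nS² + Rt)` turns the exponent `-λt + nλ²S²/(2(1 - λR))` into `-t²/(2(nS² + Rt))`. -/

open Real

lemma abs_pow_two_mul_add_one_le (x : ℝ) (j : ℕ) :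
    |x| ^ (2 * j + 1) ≤ (x ^ (2 * j) + x ^ (2 * j + 2)) / 2 := by
  have hsq (m : ℕ) : (|x| ^ m) ^ 2 = x ^ (2 * m) := by
    rw [← pow_mul, mul_comm, pow_mul, sq_abs, ← pow_mul]
  rw [show |x| ^ (2 * j + 1) = |x| ^ j * |x| ^ (j + 1) by ring, ← hsq j,
    show 2 * j + 2 = 2 * (j + 1) by ring, ← hsq (j + 1)]
  linarith [two_mul_le_add_sq (|x| ^ j) (|x| ^ (j + 1))]

section

variable {Ω : Type*} [MeasurableSpace Ω] {μ : Measure Ω} {Y : Ω → ℝ}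

lemma integral_abs_pow_two_mul_add_one_le {j : ℕ} (h₁ : Integrable (fun ω ↦ Y ω ^ (2 * j)) μ)
    (h₂ : Integrable (fun ω ↦ Y ω ^ (2 * j + 2)) μ) :
    ∫ ω, |Y ω| ^ (2 * j + 1) ∂μ ≤ ((∫ ω, Y ω ^ (2 * j) ∂μ) + ∫ ω, Y ω ^ (2 * j + 2) ∂μ) / 2 := by
  rw [← integral_add h₁ h₂, ← integral_div]
  exact integral_mono_of_nonneg (ae_of_all _ fun ω ↦ by positivity) ((h₁.add h₂).div_const 2)
    (ae_of_all _ fun ω ↦ abs_pow_two_mul_add_one_le (Y ω) j)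

lemma hasSum_integral_pow_div_factorial (hpow : ∀ k, Integrable (fun ω ↦ Y ω ^ k) μ)
    (hsum : Summable fun k ↦ (∫ ω, |Y ω| ^ k ∂μ) / k.factorial) :
    HasSum (fun k ↦ (∫ ω, Y ω ^ k ∂μ) / k.factorial) (∫ ω, exp (Y ω) ∂μ) := by
  have h := hasSum_integral_of_summable_integral_norm (μ := μ)
    (F := fun k ω ↦ Y ω ^ k / k.factorial) (fun k ↦ (hpow k).div_const _) (by
      simpa only [norm_div, norm_pow, Real.norm_eq_abs, Nat.abs_cast, integral_div] using hsum)
  have hexp (y : ℝ) : ∑' k, y ^ k / k.factorial = exp y := by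
    rw [Real.exp_eq_exp_ℝ, (NormedSpace.expSeries_div_hasSum_exp y).tsum_eq]
  simpa only [integral_div, hexp] using h

lemma summable_integral_abs_pow_div_factorial (hpow : ∀ k, Integrable (fun ω ↦ Y ω ^ k) μ)
    {c q : ℝ} (hq₀ : 0 ≤ q) (hq₁ : q < 1)
    (hmom : ∀ k, 2 ≤ k → (∫ ω, Y ω ^ k ∂μ) / k.factorial ≤ c * q ^ (k - 2)) :
    Summable fun k ↦ (∫ ω, |Y ω| ^ k ∂μ) / k.factorial := by
  have hm_bound (j : ℕ) :
      (∫ ω, Y ω ^ (2 * j + 2) ∂μ) / (2 * j + 2).factorial ≤ c * (q ^ 2) ^ j := by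
    simpa [← pow_mul] using hmom (2 * j + 2) (by omega)
  have hr₀ : 0 ≤ q ^ 2 := by positivity
  have hr₁ : q ^ 2 < 1 := by nlinarith
  have hgeom := summable_geometric_of_lt_one hr₀ hr₁
  rw [← summable_nat_add_iff 2]
  apply Summable.even_add_odd
  · refine .of_nonneg_of_le (fun j ↦ by positivity) (fun j ↦ ?_) (hgeom.mul_left c)
    have : ∫ ω, |Y ω| ^ (2 * j + 2) ∂μ = ∫ ω, Y ω ^ (2 * j + 2) ∂μ :=
      integral_congr_ae (ae_of_all _ fun ω ↦ Even.pow_abs ⟨j + 1, by ring⟩ _)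
    simpa [this] using hm_bound j
  · have hlin : Summable fun j : ℕ ↦ ((j : ℝ) + 2) * (q ^ 2) ^ j := by
      have h := summable_pow_mul_geometric_of_norm_lt_one 1 (by rwa [Real.norm_of_nonneg hr₀])
      exact (h.add (hgeom.mul_left 2)).congr fun j ↦ by ring
    refine .of_nonneg_of_le (fun j ↦ by positivity) (fun j ↦ ?_)
      ((hgeom.mul_left c).add (hlin.mul_left (c * q ^ 2)))
    have hodd : ∫ ω, |Y ω| ^ (2 * j + 3) ∂μ
        ≤ ((∫ ω, Y ω ^ (2 * j + 2) ∂μ) + ∫ ω, Y ω ^ (2 * j + 4) ∂μ) / 2 :=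
      integral_abs_pow_two_mul_add_one_le (j := j + 1) (hpow _) (hpow _)
    have hB : 0 ≤ ∫ ω, Y ω ^ (2 * j + 2) ∂μ :=
      integral_nonneg fun ω ↦ Even.pow_nonneg ⟨j + 1, by ring⟩ _
    have hB' : ∫ ω, Y ω ^ (2 * j + 2) ∂μ ≤ c * (q ^ 2) ^ j * (2 * j + 2).factorial :=
      (div_le_iff₀ (by positivity)).1 (hm_bound j)
    have hC : ∫ ω, Y ω ^ (2 * j + 4) ∂μ ≤ c * (q ^ 2) ^ (j + 1) * (2 * j + 4).factorial :=
      (div_le_iff₀ (by positivity)).1 (hm_bound (j + 1))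
    have hf₃ : ((2 * j + 3).factorial : ℝ) = (2 * j + 3) * (2 * j + 2).factorial := by
      rw [Nat.factorial_succ]; push_cast; ring
    have hf₄ : ((2 * j + 4).factorial : ℝ) = (2 * j + 4) * (2 * j + 3).factorial := by
      rw [Nat.factorial_succ]; push_cast; ring
    show (∫ ω, |Y ω| ^ (2 * j + 3) ∂μ) / (2 * j + 3).factorial ≤ _
    rw [hf₄, hf₃, pow_succ] at hC
    rw [div_le_iff₀ (by positivity), hf₃]
    have hj : (0 : ℝ) ≤ j := j.cast_nonneg
    nlinarith [mul_le_mul_of_nonneg_left hB' (by positivity : (0 : ℝ) ≤ 2 * j + 3)]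

lemma integral_exp_le_of_moment_le [IsProbabilityMeasure μ]
    (hpow : ∀ k, Integrable (fun ω ↦ Y ω ^ k) μ) {c q : ℝ} (hq₀ : 0 ≤ q) (hq₁ : q < 1)
    (hmom : ∀ k, 2 ≤ k → (∫ ω, Y ω ^ k ∂μ) / k.factorial ≤ c * q ^ (k - 2)) :
    ∫ ω, exp (Y ω) ∂μ ≤ 1 + ∫ ω, Y ω ∂μ + c / (1 - q) := by
  have hsum := hasSum_integral_pow_div_factorial hpow
    (summable_integral_abs_pow_div_factorial hpow hq₀ hq₁ hmom)
  have htail : ∑' k, (∫ ω, Y ω ^ (k + 2) ∂μ) / (k + 2).factorial ≤ c / (1 - q) := by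
    rw [div_eq_mul_inv, ← tsum_geometric_of_lt_one hq₀ hq₁, ← tsum_mul_left]
    refine (summable_nat_add_iff 2).2 hsum.summable |>.tsum_le_tsum (fun k ↦ ?_)
      ((summable_geometric_of_lt_one hq₀ hq₁).mul_left c)
    simpa using hmom (k + 2) (by omega)
  have hhead : ∑ k ∈ Finset.range 2, (∫ ω, Y ω ^ k ∂μ) / k.factorial = 1 + ∫ ω, Y ω ∂μ := by
    simp [Finset.sum_range_succ]
  rw [← hsum.tsum_eq, ← hsum.summable.sum_add_tsum_nat_add 2, hhead]
  linarith

lemma mgf_le_of_bernstein_moment [IsProbabilityMeasure μ] {X : Ω → ℝ} {S R l : ℝ}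
    (hR : 0 ≤ R) (hl : 0 ≤ l) (hlR : l * R < 1) (hint : Integrable X μ)
    (hpow : ∀ k, 2 ≤ k → Integrable (fun ω ↦ X ω ^ k) μ)
    (hmom : ∀ k, 2 ≤ k → ∫ ω, X ω ^ k ∂μ ≤ k.factorial * S ^ 2 * R ^ (k - 2) / 2) :
    mgf X μ l ≤ exp (l * ∫ ω, X ω ∂μ + l ^ 2 * S ^ 2 / (2 * (1 - l * R))) := by
  have hpow' (k : ℕ) : Integrable (fun ω ↦ (l * X ω) ^ k) μ := by
    simp_rw [mul_pow]
    refine Integrable.const_mul ?_ _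
    rcases k with _ | _ | k
    · simp
    · simpa using hint
    · exact hpow _ (by omega)
  have hmom' (k : ℕ) (hk : 2 ≤ k) :
      (∫ ω, (l * X ω) ^ k ∂μ) / k.factorial ≤ l ^ 2 * S ^ 2 / 2 * (l * R) ^ (k - 2) := by
    obtain ⟨j, rfl⟩ := Nat.exists_eq_add_of_le' hk
    have h := hmom (j + 2) hk
    simp_rw [mul_pow, integral_const_mul, Nat.add_sub_cancel] at h ⊢
    rw [div_le_iff₀ (by positivity)]
    calc l ^ (j + 2) * ∫ ω, X ω ^ (j + 2) ∂μ
        ≤ l ^ (j + 2) * ((j + 2).factorial * S ^ 2 * R ^ j / 2) := by gcongr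
      _ = _ := by ring
  have h := integral_exp_le_of_moment_le hpow' (by positivity) hlR hmom'
  rw [integral_const_mul, div_div] at h
  unfold mgf
  linarith [add_one_le_exp (l * ∫ ω, X ω ∂μ + l ^ 2 * S ^ 2 / (2 * (1 - l * R)))]

lemma mgf_sub_integral_le_of_bernstein_moment [IsProbabilityMeasure μ] {X : Ω → ℝ} {S R l : ℝ}
    (hR : 0 ≤ R) (hl : 0 ≤ l) (hlR : l * R < 1) (hint : Integrable X μ)
    (hpow : ∀ k, 2 ≤ k → Integrable (fun ω ↦ X ω ^ k) μ)
    (hmom : ∀ k, 2 ≤ k → ∫ ω, X ω ^ k ∂μ ≤ k.factorial * S ^ 2 * R ^ (k - 2) / 2) :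
    mgf (fun ω ↦ X ω - ∫ ω', X ω' ∂μ) μ l ≤ exp (l ^ 2 * S ^ 2 / (2 * (1 - l * R))) := by
  simp_rw [sub_eq_add_neg, mgf_add_const]
  calc mgf X μ l * exp (l * -∫ ω, X ω ∂μ)
      ≤ exp (l * ∫ ω, X ω ∂μ + l ^ 2 * S ^ 2 / (2 * (1 - l * R))) * exp (l * -∫ ω, X ω ∂μ) := by
        gcongr; exact mgf_le_of_bernstein_moment hR hl hlR hint hpow hmom
    _ = _ := by rw [← exp_add]; ring_nf

lemma measureReal_ge_le_exp_of_mgf_le [IsProbabilityMeasure μ] {Z : Ω → ℝ} {v R t : ℝ}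
    (hv : 0 < v) (hR : 0 ≤ R) (ht : 0 ≤ t)
    (hint : ∀ l, 0 < l → l * R < 1 → Integrable (fun ω ↦ exp (l * Z ω)) μ)
    (hmgf : ∀ l, 0 < l → l * R < 1 → mgf Z μ l ≤ exp (l ^ 2 * v / (2 * (1 - l * R)))) :
    μ.real {ω | t ≤ Z ω} ≤ exp (-t ^ 2 / (2 * (v + R * t))) := by
  rcases ht.eq_or_lt with rfl | ht
  · simp [measureReal_le_one]
  set D := v + R * t
  have hD : 0 < D := by positivity
  set l := t / D
  have hl : 0 < l := by positivity
  have h1 : 1 - l * R = v / D := by simp only [l, D]; field_simp; ring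
  have hlR : l * R < 1 := by linarith [show 0 < v / D by positivity]
  calc μ.real {ω | t ≤ Z ω} ≤ exp (-l * t) * mgf Z μ l :=
        measure_ge_le_exp_mul_mgf t hl.le (hint l hl hlR)
    _ ≤ exp (-l * t) * exp (l ^ 2 * v / (2 * (1 - l * R))) := by gcongr; exact hmgf l hl hlR
    _ = exp (-t ^ 2 / (2 * D)) := by rw [← exp_add, h1]; congr 1; simp only [l]; field_simp; ring

end

/-- **One-tailed Bernstein inequality** with the moment-growth condition imposed on the
non-centered variables: if `E[X_i^k] ≤ k! S² R^(k-2) / 2` for all `k ≥ 2`, and the moment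
generating functions `E[exp(λ X_i)]` are finite for `0 < λ < 1/R`, then
`P[Σ (X_i - E X_i) ≥ t] ≤ exp(-t² / (2 (n S² + R t)))` for all `t ≥ 0`. -/
theorem bernstein_one_tailed
    {Ω : Type*} [MeasurableSpace Ω] (μ : Measure Ω) [IsProbabilityMeasure μ]
    (n : ℕ) (X : Fin n → Ω → ℝ) (S R : ℝ) (hS : 0 < S) (hR : 0 < R)
    (hmeas : ∀ i, Measurable (X i))
    (hindep : iIndepFun X μ)
    (hint : ∀ i, Integrable (X i) μ)
    (hpowint : ∀ (i : Fin n) (k : ℕ), 2 ≤ k → Integrable (fun ω => X i ω ^ k) μ)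
    (hmom : ∀ (i : Fin n) (k : ℕ), 2 ≤ k →
      ∫ ω, X i ω ^ k ∂μ ≤ (k.factorial : ℝ) * S ^ 2 * R ^ (k - 2) / 2)
    (hmgf : ∀ (i : Fin n) (l : ℝ), 0 < l → l < 1 / R →
      Integrable (fun ω => Real.exp (l * X i ω)) μ)
    (t : ℝ) (ht : 0 ≤ t) :
    μ {ω | t ≤ ∑ i, (X i ω - ∫ ω', X i ω' ∂μ)}
      ≤ ENNReal.ofReal (Real.exp (-t ^ 2 / (2 * (n * S ^ 2 + R * t)))) := by
  rcases Nat.eq_zero_or_pos n with rfl | hn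
  · rcases ht.eq_or_lt with rfl | ht
    · simp
    · simp [ht.not_ge]
  set Y : Fin n → Ω → ℝ := fun i ω ↦ X i ω - ∫ ω', X i ω' ∂μ
  have hYmeas (i : Fin n) : Measurable (Y i) := (hmeas i).sub_const _
  have hYindep : iIndepFun Y μ := hindep.comp _ fun i ↦ measurable_id.sub_const _
  have hYint (i : Fin n) (l : ℝ) (hl : 0 < l) (hlR : l * R < 1) :
      Integrable (fun ω ↦ exp (l * Y i ω)) μ := by
    simp_rw [Y, mul_sub, exp_sub]
    exact (hmgf i l hl (by rwa [lt_div_iff₀ hR])).div_const _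
  have hbound := measureReal_ge_le_exp_of_mgf_le (Z := ∑ i, Y i) (v := n * S ^ 2) (by positivity)
    hR.le ht (fun l hl hlR ↦ hYindep.integrable_exp_mul_sum hYmeas fun i _ ↦ hYint i l hl hlR)
    fun l hl hlR ↦ by
      rw [hYindep.mgf_sum hYmeas]
      calc ∏ i, mgf (Y i) μ l ≤ ∏ _i : Fin n, exp (l ^ 2 * S ^ 2 / (2 * (1 - l * R))) :=
            Finset.prod_le_prod (fun i _ ↦ mgf_nonneg) fun i _ ↦
              mgf_sub_integral_le_of_bernstein_moment hR.le hl.le hlR (hint i) (hpowint i) (hmom i)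
        _ = _ := by rw [Finset.prod_const, Finset.card_fin, ← exp_nat_mul]; ring_nf
  rw [← ofReal_measureReal]
  simpa [Y, Finset.sum_apply] using ENNReal.ofReal_le_ofReal hbound
end

section
/- Let X_1, …, X_n be independent real random variables and S, R > 0 constants such that E[|X_i|^k] ≤ k!·S²·R^{k−2}/2 for every i ∈ {1,…,n} and every integer k ≥ 2. Then for every t ≥ 0, P[|Σ_{i=1}^n (X_i − E[X_i])| ≥ t] ≤ 2·exp(−t² / (2(n·S² + R·t))). -/
/-! For `0 ≤ l` with `l R < 1`, expanding `exp` into its power series and applying the moment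
condition termwise bounds `E[exp (l |X|) - 1 - l |X|]` by the geometric series
`l² S² / 2 · ∑ (l R)^k = l² S² / (2 (1 - l R))`. Since `exp v ≤ 1 + v + (exp |v| - 1 - |v|)`, the
moment generating function of `X - E X` at `l` is at most `exp (l² S² / (2 (1 - l R)))`.
Independence multiplies these bounds, and the Chernoff bound at `l = t / (n S² + R t)` gives the
upper tail `exp (-t² / (2 (n S² + R t)))`. The same bound for `-X` and a union bound give the
two-sided inequality. -/

open MeasureTheory ProbabilityTheory Real
open scoped Nat

lemma Real.hasSum_pow_div_factorial_add_two (u : ℝ) :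
    HasSum (fun k : ℕ => u ^ (k + 2) / (k + 2)!) (exp u - 1 - u) := by
  have h := (hasSum_nat_add_iff' 2).mpr (NormedSpace.expSeries_div_hasSum_exp u)
  simpa [Finset.sum_range_succ, ← Real.exp_eq_exp_ℝ, sub_sub] using h

lemma Real.exp_sub_one_sub_nonneg (u : ℝ) : 0 ≤ exp u - 1 - u := by
  linarith [add_one_le_exp u]

lemma Real.exp_le_one_add_add_exp_abs_sub (v : ℝ) :
    exp v ≤ 1 + v + (exp |v| - 1 - |v|) := by
  rcases le_or_gt 0 v with hv | hv
  · rw [abs_of_nonneg hv]; linarith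
  · have h := sinh_le_self_iff.mpr hv.le
    rw [sinh_eq] at h
    rw [abs_of_neg hv]
    linarith

lemma bernstein_exponent_eq {c S R t : ℝ} (hc : c ≠ 0) (hS : S ≠ 0) (hD : c * S ^ 2 + R * t ≠ 0) :
    -(t / (c * S ^ 2 + R * t)) * t
        + c * ((t / (c * S ^ 2 + R * t)) ^ 2 * S ^ 2 / (2 * (1 - t / (c * S ^ 2 + R * t) * R)))
      = -t ^ 2 / (2 * (c * S ^ 2 + R * t)) := by
  have h1 : 1 - t / (c * S ^ 2 + R * t) * R = c * S ^ 2 / (c * S ^ 2 + R * t) := by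
    rw [div_mul_eq_mul_div, mul_comm t R, one_sub_div hD, add_sub_cancel_right]
  rw [h1]
  field_simp
  ring

lemma MeasureTheory.measureReal_abs_ge_le_add {Ω : Type*} [MeasurableSpace Ω] (μ : Measure Ω)
    (f : Ω → ℝ) (t : ℝ) :
    μ.real {ω | t ≤ |f ω|} ≤ μ.real {ω | t ≤ f ω} + μ.real {ω | t ≤ -f ω} := by
  simp_rw [le_abs, Set.ofPred_or]
  exact measureReal_union_le _ _

namespace ProbabilityTheory

variable {Ω : Type*} [MeasurableSpace Ω] {μ : Measure Ω} {X : Ω → ℝ} {S R l : ℝ}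

def HasBernsteinMoments (X : Ω → ℝ) (S R : ℝ) (μ : Measure Ω) : Prop :=
  ∀ k : ℕ, 2 ≤ k → ∫⁻ ω, ENNReal.ofReal (|X ω| ^ k) ∂μ
    ≤ ENNReal.ofReal ((k.factorial : ℝ) * S ^ 2 * R ^ (k - 2) / 2)

namespace HasBernsteinMoments

lemma neg (h : HasBernsteinMoments X S R μ) : HasBernsteinMoments (fun ω => -X ω) S R μ := by
  simpa only [HasBernsteinMoments, abs_neg] using h

lemma integrable [IsFiniteMeasure μ] (h : HasBernsteinMoments X S R μ) (hX : AEMeasurable X μ) :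
    Integrable X μ := by
  refine ((memLp_two_iff_integrable_sq hX.aestronglyMeasurable).2
    ⟨(hX.pow_const 2).aestronglyMeasurable, ?_⟩).integrable one_le_two
  rw [hasFiniteIntegral_iff_ofReal (ae_of_all _ fun ω => sq_nonneg (X ω))]
  simp_rw [← sq_abs (X _)]
  exact (h 2 le_rfl).trans_lt ENNReal.ofReal_lt_top

lemma lintegral_exp_mul_abs_sub_le (h : HasBernsteinMoments X S R μ) (hX : AEMeasurable X μ)
    (hR : 0 ≤ R) (hl : 0 ≤ l) (hlR : l * R < 1) :
    ∫⁻ ω, ENNReal.ofReal (exp (l * |X ω|) - 1 - l * |X ω|) ∂μ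
      ≤ ENNReal.ofReal (l ^ 2 * S ^ 2 / (2 * (1 - l * R))) := by
  have hseries (ω : Ω) : ENNReal.ofReal (exp (l * |X ω|) - 1 - l * |X ω|)
      = ∑' k : ℕ, ENNReal.ofReal (l ^ (k + 2) / (k + 2)!) * ENNReal.ofReal (|X ω| ^ (k + 2)) := by
    have hsum := hasSum_pow_div_factorial_add_two (l * |X ω|)
    rw [← hsum.tsum_eq, ENNReal.ofReal_tsum_of_nonneg (fun k => by positivity) hsum.summable]
    refine tsum_congr fun k => ?_
    rw [← ENNReal.ofReal_mul (by positivity), mul_pow, mul_div_right_comm]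
  have hterm (k : ℕ) : ENNReal.ofReal (l ^ (k + 2) / (k + 2)!)
      * ENNReal.ofReal (((k + 2)! : ℝ) * S ^ 2 * R ^ (k + 2 - 2) / 2)
      = ENNReal.ofReal (l ^ 2 * S ^ 2 / 2) * ENNReal.ofReal (l * R) ^ k := by
    rw [← ENNReal.ofReal_pow (by positivity), ← ENNReal.ofReal_mul (by positivity),
      ← ENNReal.ofReal_mul (by positivity), Nat.add_sub_cancel]
    congr 1
    field_simp
    ring
  have hgeom : ∑' k : ℕ, ENNReal.ofReal (l * R) ^ k = ENNReal.ofReal (1 - l * R)⁻¹ := by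
    rw [ENNReal.tsum_geometric, ENNReal.ofReal_inv_of_pos (by linarith),
      ENNReal.ofReal_sub _ (by positivity), ENNReal.ofReal_one]
  calc ∫⁻ ω, ENNReal.ofReal (exp (l * |X ω|) - 1 - l * |X ω|) ∂μ
      = ∑' k : ℕ, ENNReal.ofReal (l ^ (k + 2) / (k + 2)!)
          * ∫⁻ ω, ENNReal.ofReal (|X ω| ^ (k + 2)) ∂μ := by
        simp_rw [hseries, ← lintegral_const_mul' _ _ ENNReal.ofReal_ne_top]
        exact lintegral_tsum fun k => by fun_prop
    _ ≤ ∑' k : ℕ, ENNReal.ofReal (l ^ 2 * S ^ 2 / 2) * ENNReal.ofReal (l * R) ^ k :=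
        ENNReal.tsum_le_tsum fun k => (hterm k).symm ▸ mul_le_mul_right (h (k + 2) le_add_self) _
    _ = ENNReal.ofReal (l ^ 2 * S ^ 2 / (2 * (1 - l * R))) := by
        rw [ENNReal.tsum_mul_left, hgeom, ← ENNReal.ofReal_mul (by positivity), ← div_eq_mul_inv,
          div_div]

lemma integrable_exp_mul_abs_sub (h : HasBernsteinMoments X S R μ) (hX : AEMeasurable X μ)
    (hR : 0 ≤ R) (hl : 0 ≤ l) (hlR : l * R < 1) :
    Integrable (fun ω => exp (l * |X ω|) - 1 - l * |X ω|) μ := by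
  refine ⟨by fun_prop, ?_⟩
  rw [hasFiniteIntegral_iff_ofReal (ae_of_all _ fun ω => exp_sub_one_sub_nonneg _)]
  exact (h.lintegral_exp_mul_abs_sub_le hX hR hl hlR).trans_lt ENNReal.ofReal_lt_top

lemma integrable_exp_mul [IsFiniteMeasure μ] (h : HasBernsteinMoments X S R μ)
    (hX : AEMeasurable X μ) (hR : 0 ≤ R) (hl : 0 ≤ l) (hlR : l * R < 1) :
    Integrable (fun ω => exp (l * X ω)) μ := by
  refine Integrable.mono' ((h.integrable_exp_mul_abs_sub hX hR hl hlR).add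
    ((integrable_const 1).add ((h.integrable hX).abs.const_mul l))) (by fun_prop)
    (ae_of_all _ fun ω => ?_)
  rw [norm_of_nonneg (exp_pos _).le]
  have := exp_le_exp.mpr (mul_le_mul_of_nonneg_left (le_abs_self (X ω)) hl)
  simp only [Pi.add_apply]
  linarith

lemma integral_exp_mul_le [IsProbabilityMeasure μ] (h : HasBernsteinMoments X S R μ)
    (hX : AEMeasurable X μ) (hR : 0 ≤ R) (hl : 0 ≤ l) (hlR : l * R < 1) :
    ∫ ω, exp (l * X ω) ∂μ ≤ 1 + l * μ[X] + l ^ 2 * S ^ 2 / (2 * (1 - l * R)) := by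
  have hlin : Integrable (fun ω => 1 + l * X ω) μ :=
    (integrable_const 1).add ((h.integrable hX).const_mul l)
  have hg := h.integrable_exp_mul_abs_sub hX hR hl hlR
  have hEg : ∫ ω, (exp (l * |X ω|) - 1 - l * |X ω|) ∂μ
      ≤ l ^ 2 * S ^ 2 / (2 * (1 - l * R)) := by
    have hB : 0 ≤ l ^ 2 * S ^ 2 / (2 * (1 - l * R)) := by
      have : 0 < 1 - l * R := by linarith
      positivity
    rw [← ENNReal.ofReal_le_ofReal_iff hB, ofReal_integral_eq_lintegral_ofReal hg
      (ae_of_all _ fun ω => exp_sub_one_sub_nonneg _)]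
    exact h.lintegral_exp_mul_abs_sub_le hX hR hl hlR
  calc ∫ ω, exp (l * X ω) ∂μ
      ≤ ∫ ω, (1 + l * X ω + (exp (l * |X ω|) - 1 - l * |X ω|)) ∂μ := by
        refine integral_mono (h.integrable_exp_mul hX hR hl hlR)
          (hlin.add hg) fun ω => ?_
        simpa only [abs_mul, abs_of_nonneg hl] using exp_le_one_add_add_exp_abs_sub (l * X ω)
    _ = 1 + l * μ[X] + ∫ ω, (exp (l * |X ω|) - 1 - l * |X ω|) ∂μ := by
        rw [integral_add hlin hg, integral_add (integrable_const 1) ((h.integrable hX).const_mul l),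
          integral_const_mul]
        simp
    _ ≤ 1 + l * μ[X] + l ^ 2 * S ^ 2 / (2 * (1 - l * R)) := by linarith

lemma integrable_exp_mul_sub_integral [IsFiniteMeasure μ] (h : HasBernsteinMoments X S R μ)
    (hX : AEMeasurable X μ) (hR : 0 ≤ R) (hl : 0 ≤ l) (hlR : l * R < 1) :
    Integrable (fun ω => exp (l * (X ω - μ[X]))) μ := by
  simp_rw [mul_sub, exp_sub]
  exact (h.integrable_exp_mul hX hR hl hlR).div_const _

lemma mgf_sub_integral_le [IsProbabilityMeasure μ] (h : HasBernsteinMoments X S R μ)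
    (hX : AEMeasurable X μ) (hR : 0 ≤ R) (hl : 0 ≤ l) (hlR : l * R < 1) :
    mgf (fun ω => X ω - μ[X]) μ l ≤ exp (l ^ 2 * S ^ 2 / (2 * (1 - l * R))) := by
  set B := l ^ 2 * S ^ 2 / (2 * (1 - l * R))
  calc mgf (fun ω => X ω - μ[X]) μ l = mgf X μ l * exp (-(l * μ[X])) := by
        simp_rw [sub_eq_add_neg, mgf_add_const, mul_neg]
    _ ≤ exp (l * μ[X] + B) * exp (-(l * μ[X])) := by
        gcongr
        exact (h.integral_exp_mul_le hX hR hl hlR).trans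
          (by linarith [add_one_le_exp (l * μ[X] + B)])
    _ = exp B := by rw [← exp_add, add_neg_cancel_comm]

end HasBernsteinMoments

lemma measureReal_sum_ge_le_of_mgf_le [IsFiniteMeasure μ] {ι : Type*} [Fintype ι]
    {Y : ι → Ω → ℝ} (hindep : iIndepFun Y μ) (hmeas : ∀ i, Measurable (Y i)) (hl : 0 ≤ l)
    (hint : ∀ i, Integrable (fun ω => exp (l * Y i ω)) μ) {B : ℝ}
    (hmgf : ∀ i, mgf (Y i) μ l ≤ exp B) (t : ℝ) :
    μ.real {ω | t ≤ ∑ i, Y i ω} ≤ exp (-l * t + Fintype.card ι * B) := by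
  calc μ.real {ω | t ≤ ∑ i, Y i ω} = μ.real {ω | t ≤ (∑ i, Y i) ω} := by
        simp only [Finset.sum_apply]
    _ ≤ exp (-l * t) * mgf (∑ i, Y i) μ l :=
        measure_ge_le_exp_mul_mgf t hl (hindep.integrable_exp_mul_sum hmeas fun i _ => hint i)
    _ = exp (-l * t) * ∏ i, mgf (Y i) μ l := by rw [hindep.mgf_sum hmeas]
    _ ≤ exp (-l * t) * ∏ _i : ι, exp B := by
        gcongr with i
        · exact fun i _ => mgf_nonneg
        · exact hmgf i
    _ = exp (-l * t + Fintype.card ι * B) := by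
        rw [Finset.prod_const, Finset.card_univ, ← exp_nat_mul, ← exp_add]

theorem measureReal_sum_sub_integral_ge_le [IsProbabilityMeasure μ] {ι : Type*} [Fintype ι]
    {X : ι → Ω → ℝ} (hindep : iIndepFun X μ) (hmeas : ∀ i, Measurable (X i))
    (hmom : ∀ i, HasBernsteinMoments (X i) S R μ) (hS : 0 < S) (hR : 0 ≤ R) {t : ℝ}
    (ht : 0 ≤ t) :
    μ.real {ω | t ≤ ∑ i, (X i ω - μ[X i])}
      ≤ exp (-t ^ 2 / (2 * (Fintype.card ι * S ^ 2 + R * t))) := by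
  rcases isEmpty_or_nonempty ι with hι | hι
  · rcases ht.eq_or_lt with rfl | ht
    · simp
    · simp [ht.not_ge, exp_nonneg]
  set a : ℝ := Fintype.card ι * S ^ 2
  have ha : 0 < a := by positivity
  set l := t / (a + R * t)
  have hl : 0 ≤ l := by positivity
  have hlR : l * R < 1 := by
    rw [div_mul_eq_mul_div, div_lt_one (by positivity)]
    linarith [mul_comm t R]
  have hY : iIndepFun (fun i ω => X i ω - μ[X i]) μ :=
    hindep.comp (fun i x => x - ∫ ω, X i ω ∂μ) fun i => measurable_id.sub measurable_const
  refine (measureReal_sum_ge_le_of_mgf_le hY (fun i => (hmeas i).sub measurable_const) hl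
    (fun i => (hmom i).integrable_exp_mul_sub_integral (hmeas i).aemeasurable hR hl hlR)
    (fun i => (hmom i).mgf_sub_integral_le (hmeas i).aemeasurable hR hl hlR) t).trans_eq ?_
  exact congrArg exp (bernstein_exponent_eq (by positivity) hS.ne' (by positivity))

end ProbabilityTheory

/-- **Two-tailed Bernstein inequality** under the absolute-moment growth condition
`E[|X_i|^k] ≤ k! S² R^(k-2) / 2` for all `k ≥ 2`:
`P[|Σ (X_i - E X_i)| ≥ t] ≤ 2 exp(-t² / (2 (n S² + R t)))` for all `t ≥ 0`. -/
theorem bernstein_two_tailed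
    {Ω : Type*} [MeasurableSpace Ω] (μ : Measure Ω) [IsProbabilityMeasure μ]
    (n : ℕ) (X : Fin n → Ω → ℝ) (S R : ℝ) (hS : 0 < S) (hR : 0 < R)
    (hmeas : ∀ i, Measurable (X i))
    (hindep : iIndepFun X μ)
    (hmom : ∀ (i : Fin n) (k : ℕ), 2 ≤ k →
      ∫⁻ ω, ENNReal.ofReal (|X i ω| ^ k) ∂μ
        ≤ ENNReal.ofReal ((k.factorial : ℝ) * S ^ 2 * R ^ (k - 2) / 2))
    (t : ℝ) (ht : 0 ≤ t) :
    μ {ω | t ≤ |∑ i, (X i ω - ∫ ω', X i ω' ∂μ)|}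
      ≤ ENNReal.ofReal (2 * Real.exp (-t ^ 2 / (2 * (n * S ^ 2 + R * t)))) := by
  have upper := measureReal_sum_sub_integral_ge_le hindep hmeas hmom hS hR.le ht
  have lower := measureReal_sum_sub_integral_ge_le (X := fun i ω => -X i ω)
    (hindep.comp (fun _ x => -x) fun _ => measurable_neg) (fun i => (hmeas i).neg)
    (fun i => HasBernsteinMoments.neg (hmom i)) hS hR.le ht
  simp only [Fintype.card_fin] at upper lower
  simp only [integral_neg, neg_sub_neg] at lower
  rw [ENNReal.le_ofReal_iff_toReal_le (measure_ne_top _ _) (by positivity)]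
  calc μ.real {ω | t ≤ |∑ i, (X i ω - ∫ ω', X i ω' ∂μ)|}
      ≤ μ.real {ω | t ≤ ∑ i, (X i ω - ∫ ω', X i ω' ∂μ)}
        + μ.real {ω | t ≤ -∑ i, (X i ω - ∫ ω', X i ω' ∂μ)} := measureReal_abs_ge_le_add μ _ t
    _ ≤ _ := add_le_add upper (by simpa only [← Finset.sum_neg_distrib, neg_sub] using lower)
    _ = 2 * exp (-t ^ 2 / (2 * (n * S ^ 2 + R * t))) := by ring
end

section
/- Let W^{(1)}, …, W^{(m)} ∈ ℝ^{d×d̃} be arbitrary matrices with columns w_j^{(p)}, let κ̃_p(x, y) = (1/d̃)·Σ_{j=1}^{d̃} cos(⟨w_j^{(p)}, x − y⟩) be their RFF kernels, and let k̃_S^m(x, y) = Σ_{i ∈ Δ_m(L_x), j ∈ Δ_m(L_y)} Π_{p=1}^m δ_{i_p, j_p} κ̃_p(x_{i_p}, y_{j_p}) be the level-m Random Fourier Signature Feature (RFSF) kernel, which uses the independent kernel κ̃_p in the p-th factor. Then for all finite sequences x, y in ℝ^d, |k̃_S^m(x, y)| ≤ (Π_{p=1}^m ‖W^{(p)}‖_2²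 / (m!)²) · (‖x‖_{1-var}·‖y‖_{1-var} / d̃)^m, where ‖·‖_2 is the spectral norm. -/
open MeasureTheory ProbabilityTheory

noncomputable section

/-- `ℝ^d` with the Euclidean norm. -/
abbrev Euc (d : ℕ) : Type := EuclideanSpace ℝ (Fin d)

/-- 1-variation `‖x‖_{1-var} = Σ_{i=1}^{L} ‖x_i - x_{i-1}‖₂` of the sequence `x_0, …, x_L`. -/
def oneVar {d : ℕ} (x : ℕ → Euc d) (L : ℕ) : ℝ :=
  ∑ i ∈ Finset.range L, ‖x (i + 1) - x i‖

/-- Second-order cross-differencing of a static kernel `g` along the sequences `x, y`: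
the increment of `g` corresponding to the steps `x a → x (a+1)` and `y b → y (b+1)`. -/
def dDelta {d : ℕ} (g : Euc d → Euc d → ℝ) (x y : ℕ → Euc d) (a b : ℕ) : ℝ :=
  g (x (a + 1)) (y (b + 1)) - g (x (a + 1)) (y b) - g (x a) (y (b + 1)) + g (x a) (y b)

open scoped Classical in
/-- Level-`m` (order-1 discretized) signature kernel of the sequences `x_0, …, x_Lx` and
`y_0, …, y_Ly`, with the (possibly different) static kernel `g p` in the `p`-th factor:
`Σ_{i ∈ Δ_m(Lx), j ∈ Δ_m(Ly)} Π_p δ_{i_p, j_p} (g p) (x_{i_p}, y_{j_p})`, where `Δ_m(n)` is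
the set of strictly increasing `m`-tuples of indices in `{1, …, n}`. -/
def sigKernelFam {d : ℕ} (m : ℕ) (g : Fin m → Euc d → Euc d → ℝ)
    (x y : ℕ → Euc d) (Lx Ly : ℕ) : ℝ :=
  ∑ i ∈ Finset.univ.filter (fun i : Fin m → Fin Lx => StrictMono i),
    ∑ j ∈ Finset.univ.filter (fun j : Fin m → Fin Ly => StrictMono j),
      ∏ p : Fin m, dDelta (g p) x y (i p) (j p)

/-- Level-`m` signature kernel built from a single static kernel `g`. -/
def sigKernel {d : ℕ} (g : Euc d → Euc d → ℝ) (m : ℕ)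
    (x y : ℕ → Euc d) (Lx Ly : ℕ) : ℝ :=
  sigKernelFam m (fun _ => g) x y Lx Ly

/-- Random Fourier Feature kernel `κ̃(x,y) = (1/d̃) Σ_j cos ⟨w_j, x - y⟩` with
frequencies (columns) `W : Fin d̃ → ℝ^d`. -/
def rff {d dt : ℕ} (W : Fin dt → Euc d) (x y : Euc d) : ℝ :=
  (1 / (dt : ℝ)) * ∑ j : Fin dt, Real.cos (∑ a : Fin d, W j a * (x a - y a))

/-- Spectral (operator) norm of the `d × d̃` matrix with columns `W`. -/
def specNorm {d dt : ℕ} (W : Fin dt → Euc d) : ℝ :=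
  ‖LinearMap.toContinuousLinearMap (Matrix.toEuclideanLin (Matrix.of fun i j => W j i))‖

/-- Spectral (operator) norm of a square matrix. -/
def mSpecNorm {d : ℕ} (A : Matrix (Fin d) (Fin d) ℝ) : ℝ :=
  ‖LinearMap.toContinuousLinearMap (Matrix.toEuclideanLin A)‖

/-- `i`-th standard basis vector of `ℝ^d`. -/
def esingle (d : ℕ) (i : Fin d) : Euc d := EuclideanSpace.single i (1 : ℝ)

/-- The `d × d` matrix `(∂² g(s,t) / ∂s_i ∂t_j)_{i,j}` of mixed second partial derivatives
(the cross-derivative block of the Hessian) of a function `g : ℝ^d × ℝ^d → ℝ`. -/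
def crossDeriv {d : ℕ} (g : Euc d → Euc d → ℝ) (s t : Euc d) : Matrix (Fin d) (Fin d) ℝ :=
  Matrix.of fun i j =>
    fderiv ℝ (fun s' => fderiv ℝ (fun t' => g s' t') t (esingle d j)) s (esingle d i)


/-!
Each factor `δ_{a,b} κ̃` is an average over frequencies `w` of mixed second differences of
`(s, t) ↦ cos (⟨w, s⟩ - ⟨w, t⟩)`; the product-to-sum formula bounds each of these by
`|⟨w, Δx⟩| |⟨w, Δy⟩|`, and Cauchy–Schwarz over the columns of `W` turns the average into
`‖W‖₂² ‖Δx‖ ‖Δy‖ / d̃`. The kernel is then dominated by an `x`-part times a `y`-part, each a sum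
over strictly increasing `m`-tuples of products of increment norms, i.e. an elementary symmetric
polynomial, which is at most `(Σ ‖Δ‖)^m / m!` because composing strictly increasing tuples with
permutations embeds `m!` copies of it into the expansion of `(Σ ‖Δ‖)^m`.
-/

open Finset Real
open scoped Nat Matrix RealInnerProductSpace Matrix.Norms.L2Operator

theorem cos_sub_second_difference (u₁ u₀ v₁ v₀ : ℝ) :
    cos (u₁ - v₁) - cos (u₁ - v₀) - cos (u₀ - v₁) + cos (u₀ - v₀)
      = 4 * sin ((u₁ - u₀) / 2) * sin ((v₁ - v₀) / 2) * cos ((u₁ + u₀ - v₁ - v₀) / 2) := by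
  set α := (u₁ - u₀) / 2
  set β := (v₁ - v₀) / 2
  set γ := (u₁ + u₀ - v₁ - v₀) / 2
  rw [show u₁ - v₁ = γ + (α - β) by ring, show u₁ - v₀ = γ + (α + β) by ring,
    show u₀ - v₁ = γ - (α + β) by ring, show u₀ - v₀ = γ - (α - β) by ring]
  simp only [cos_add, cos_sub, sin_add, sin_sub]
  ring

theorem abs_cos_sub_second_difference_le (u₁ u₀ v₁ v₀ : ℝ) :
    |cos (u₁ - v₁) - cos (u₁ - v₀) - cos (u₀ - v₁) + cos (u₀ - v₀)|
      ≤ |u₁ - u₀| * |v₁ - v₀| := by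
  have hsin (t : ℝ) : |sin (t / 2)| ≤ |t| / 2 := by
    simpa [abs_div] using abs_sin_le_abs (x := t / 2)
  rw [cos_sub_second_difference, abs_mul, abs_mul, abs_mul, show |(4:ℝ)| = 4 by norm_num]
  calc 4 * |sin ((u₁ - u₀) / 2)| * |sin ((v₁ - v₀) / 2)| * |cos ((u₁ + u₀ - v₁ - v₀) / 2)|
      ≤ 4 * (|u₁ - u₀| / 2) * (|v₁ - v₀| / 2) * 1 := by
        gcongr
        exacts [hsin _, hsin _, abs_cos_le_one _]
    _ = |u₁ - u₀| * |v₁ - v₀| := by ring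

theorem rff_eq_sum_cos_inner {d dt : ℕ} (W : Fin dt → Euc d) (s t : Euc d) :
    rff W s t = (1 / (dt : ℝ)) * ∑ j, cos (⟪W j, s⟫ - ⟪W j, t⟫) := by
  simp only [rff, ← inner_sub_right]
  simp [PiLp.inner_apply, mul_comm]

theorem sqrt_sum_inner_sq_le_specNorm_mul {d dt : ℕ} (W : Fin dt → Euc d) (v : Euc d) :
    √(∑ j, ⟪W j, v⟫ ^ 2) ≤ specNorm W * ‖v‖ := by
  set A : Matrix (Fin d) (Fin dt) ℝ := Matrix.of fun i j => W j i
  have hA : specNorm W = ‖Aᴴ‖ := (Matrix.l2_opNorm_conjTranspose A).symm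
  have hv : ‖(EuclideanSpace.equiv (Fin dt) ℝ).symm (Aᴴ *ᵥ v)‖ = √(∑ j, ⟪W j, v⟫ ^ 2) := by
    rw [EuclideanSpace.norm_eq]
    refine congrArg sqrt (sum_congr rfl fun j _ => ?_)
    simp [A, Matrix.mulVec, dotProduct, PiLp.inner_apply, mul_comm]
  rw [hA, ← hv]
  exact Matrix.l2_opNorm_mulVec _ _

theorem abs_dDelta_rff_le {d dt : ℕ} (W : Fin dt → Euc d) (x y : ℕ → Euc d) (a b : ℕ) :
    |dDelta (rff W) x y a b|
      ≤ specNorm W ^ 2 / dt * (‖x (a + 1) - x a‖ * ‖y (b + 1) - y b‖) := by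
  set Δx := x (a + 1) - x a
  set Δy := y (b + 1) - y b
  have hdd : dDelta (rff W) x y a b = (1 / (dt : ℝ)) * ∑ j,
      (cos (⟪W j, x (a + 1)⟫ - ⟪W j, y (b + 1)⟫) - cos (⟪W j, x (a + 1)⟫ - ⟪W j, y b⟫)
        - cos (⟪W j, x a⟫ - ⟪W j, y (b + 1)⟫) + cos (⟪W j, x a⟫ - ⟪W j, y b⟫)) := by
    simp only [dDelta, rff_eq_sum_cos_inner, ← mul_sub, ← mul_add, ← sum_sub_distrib,
      ← sum_add_distrib]
  have hterm (j : Fin dt) :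
      |cos (⟪W j, x (a + 1)⟫ - ⟪W j, y (b + 1)⟫) - cos (⟪W j, x (a + 1)⟫ - ⟪W j, y b⟫)
        - cos (⟪W j, x a⟫ - ⟪W j, y (b + 1)⟫) + cos (⟪W j, x a⟫ - ⟪W j, y b⟫)|
        ≤ |⟪W j, Δx⟫| * |⟪W j, Δy⟫| := by
    simpa only [Δx, Δy, inner_sub_right] using abs_cos_sub_second_difference_le _ _ _ _
  have hW : 0 ≤ specNorm W := norm_nonneg _
  calc |dDelta (rff W) x y a b|
      ≤ 1 / dt * ∑ j, |⟪W j, Δx⟫| * |⟪W j, Δy⟫| := by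
        rw [hdd, abs_mul, abs_of_nonneg (by positivity)]
        gcongr
        exact (abs_sum_le_sum_abs _ _).trans (sum_le_sum fun j _ => hterm j)
    _ ≤ 1 / dt * (√(∑ j, ⟪W j, Δx⟫ ^ 2) * √(∑ j, ⟪W j, Δy⟫ ^ 2)) := by
        gcongr
        simpa only [sq_abs] using sum_mul_le_sqrt_mul_sqrt univ (|⟪W ·, Δx⟫|) (|⟪W ·, Δy⟫|)
    _ ≤ 1 / dt * ((specNorm W * ‖Δx‖) * (specNorm W * ‖Δy‖)) := by
        gcongr <;> exact sqrt_sum_inner_sq_le_specNorm_mul W _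
    _ = specNorm W ^ 2 / dt * (‖Δx‖ * ‖Δy‖) := by ring

open scoped Classical in
theorem factorial_mul_sum_strictMono_prod_le {ι : Type*} [Fintype ι] [LinearOrder ι]
    (m : ℕ) {a : ι → ℝ} (ha : ∀ i, 0 ≤ a i) :
    m ! * ∑ f ∈ univ.filter (StrictMono : (Fin m → ι) → Prop), ∏ p, a (f p)
      ≤ (∑ i, a i) ^ m := by
  set S := univ.filter (StrictMono : (Fin m → ι) → Prop)
  have hinj : Set.InjOn (fun q : Equiv.Perm (Fin m) × (Fin m → ι) => q.2 ∘ q.1)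
      ((univ ×ˢ S : Finset (Equiv.Perm (Fin m) × (Fin m → ι))) : Set _) := by
    rintro ⟨σ, f⟩ hf ⟨τ, g⟩ hg hfg
    simp only [mem_coe, mem_product, mem_filter, mem_univ, true_and, S] at hf hg
    dsimp only at hfg
    have hfg' : f = g := (hf.range_inj hg).mp <| by
      rw [← σ.surjective.range_comp f, ← τ.surjective.range_comp g, hfg]
    subst hfg'
    simp only [Prod.mk.injEq, and_true]
    exact Equiv.ext fun p => hf.injective (congrFun hfg p)
  calc (m ! : ℝ) * ∑ f ∈ S, ∏ p, a (f p)
      = ∑ σ : Equiv.Perm (Fin m), ∑ f ∈ S, ∏ p, a (f (σ p)) := by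
        have hσ (σ : Equiv.Perm (Fin m)) (f : Fin m → ι) : ∏ p, a (f (σ p)) = ∏ p, a (f p) :=
          Equiv.prod_comp σ (a ∘ f)
        simp only [hσ, sum_const, card_univ, Fintype.card_perm, Fintype.card_fin,
          nsmul_eq_mul]
    _ = ∑ g ∈ (univ ×ˢ S).image (fun q : Equiv.Perm (Fin m) × (Fin m → ι) => q.2 ∘ q.1),
          ∏ p, a (g p) := by
        rw [sum_image hinj, sum_product]
        rfl
    _ ≤ ∑ g : Fin m → ι, ∏ p, a (g p) :=
        sum_le_univ_sum_of_nonneg fun g => prod_nonneg fun p _ => ha _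
    _ = (∑ i, a i) ^ m := (Fintype.sum_pow a m).symm

theorem oneVar_nonneg {d : ℕ} (x : ℕ → Euc d) (L : ℕ) : 0 ≤ oneVar x L :=
  sum_nonneg fun _ _ => norm_nonneg _

open scoped Classical in
theorem sum_strictMono_prod_norm_sub_le {d : ℕ} (m : ℕ) (x : ℕ → Euc d) (L : ℕ) :
    ∑ i ∈ univ.filter (StrictMono : (Fin m → Fin L) → Prop), ∏ p, ‖x (i p + 1) - x (i p)‖
      ≤ oneVar x L ^ m / m ! := by
  rw [le_div_iff₀ (by positivity), mul_comm, oneVar,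
    ← Fin.sum_univ_eq_sum_range (fun i : ℕ => ‖x (i + 1) - x i‖)]
  exact factorial_mul_sum_strictMono_prod_le (a := fun i : Fin L => ‖x (i + 1) - x i‖) m
    fun _ => norm_nonneg _

theorem abs_sigKernelFam_le {d m : ℕ} (g : Fin m → Euc d → Euc d → ℝ) (c : Fin m → ℝ)
    (hc : ∀ p, 0 ≤ c p) (x y : ℕ → Euc d) (Lx Ly : ℕ)
    (hg : ∀ p a b, |dDelta (g p) x y a b| ≤ c p * (‖x (a + 1) - x a‖ * ‖y (b + 1) - y b‖)) :
    |sigKernelFam m g x y Lx Ly|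
      ≤ (∏ p, c p) * (oneVar x Lx ^ m / m !) * (oneVar y Ly ^ m / m !) := by
  classical
  calc |sigKernelFam m g x y Lx Ly|
      ≤ ∑ i ∈ univ.filter (StrictMono : (Fin m → Fin Lx) → Prop),
          ∑ j ∈ univ.filter (StrictMono : (Fin m → Fin Ly) → Prop),
            ∏ p, c p * (‖x (i p + 1) - x (i p)‖ * ‖y (j p + 1) - y (j p)‖) := by
        refine (abs_sum_le_sum_abs _ _).trans <| sum_le_sum fun i _ =>
          (abs_sum_le_sum_abs _ _).trans <| sum_le_sum fun j _ => ?_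
        rw [abs_prod]
        exact prod_le_prod (fun p _ => abs_nonneg _) fun p _ => hg p _ _
    _ = (∏ p, c p)
          * (∑ i ∈ univ.filter (StrictMono : (Fin m → Fin Lx) → Prop),
              ∏ p, ‖x (i p + 1) - x (i p)‖)
          * ∑ j ∈ univ.filter (StrictMono : (Fin m → Fin Ly) → Prop),
              ∏ p, ‖y (j p + 1) - y (j p)‖ := by
        rw [mul_assoc, sum_mul_sum, mul_sum]
        refine sum_congr rfl fun i _ => ?_
        rw [mul_sum]
        refine sum_congr rfl fun j _ => ?_
        rw [prod_mul_distrib, prod_mul_distrib]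
    _ ≤ (∏ p, c p) * (oneVar x Lx ^ m / m !) * (oneVar y Ly ^ m / m !) := by
        have hc' : 0 ≤ ∏ p, c p := prod_nonneg fun p _ => hc p
        have hx : 0 ≤ oneVar x Lx := oneVar_nonneg x Lx
        gcongr
        exacts [sum_strictMono_prod_norm_sub_le m x Lx, sum_strictMono_prod_norm_sub_le m y Ly]

/-- **Random upper bound for the level-`m` RFSF kernel.** For arbitrary matrices
`W⁽¹⁾, …, W⁽ᵐ⁾ ∈ ℝ^{d × d̃}` (given by their columns) with RFF kernels `κ̃_p`, the level-`m`
Random Fourier Signature Feature kernel (which uses `κ̃_p` in the `p`-th factor) satisfies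
`|k̃_S^m(x,y)| ≤ (Π_p ‖W⁽ᵖ⁾‖₂² / (m!)²) (‖x‖_{1-var} ‖y‖_{1-var} / d̃)^m`. -/
theorem rfsf_kernel_norm_bound {d dt : ℕ} (m : ℕ) (W : Fin m → Fin dt → Euc d)
    (x y : ℕ → Euc d) (Lx Ly : ℕ) :
    |sigKernelFam m (fun p => rff (W p)) x y Lx Ly|
      ≤ (∏ p : Fin m, specNorm (W p) ^ 2) / (m.factorial : ℝ) ^ 2 *
          (oneVar x Lx * oneVar y Ly / (dt : ℝ)) ^ m := by
  calc |sigKernelFam m (fun p => rff (W p)) x y Lx Ly|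
      ≤ (∏ p, specNorm (W p) ^ 2 / dt) * (oneVar x Lx ^ m / m !) * (oneVar y Ly ^ m / m !) :=
        abs_sigKernelFam_le _ _ (fun p => by positivity) x y Lx Ly fun p =>
          abs_dDelta_rff_le (W p) x y
    _ = _ := by
        rw [prod_div_distrib, prod_const, card_univ, Fintype.card_fin]
        ring

end
end

section
/- Let G = (V, E, f) be a finite labelled graph with vertex set V = {1, …, n}, adjacency relation i ∼ j, every vertex of degree deg(i) ≥ 1, and node attributes f : V → ℝ^d, and let P ∈ ℝ^{n×n} be the random-walk transition matrix P_{ij} = 1/deg(i) if i ∼ j, else 0. Fix M ≥ 1 and vectors u_1, …, u_M ∈ ℝ^d, and for u ∈ ℝ^d define C^u ∈ ℝ^{n×n} by C^u_{ij} = ⟨u, f(j) − f(i)⟩ if i ∼ j, else 0. Define vectors f_{k,m} ∈ ℝ^n by f_{k,0} = 𝟙 (the all-ones vector), f_{1,m} = (1/m!)·(P ⊙ C^{u_{M−m+1}} ⊙ ⋯ ⊙ C^{u_M})·𝟙 for 1 ≤ m ≤ M, and for k ≥ 2: f_{k,m} = P·f_{k−1,m} + Σ_{r=1}^m (1/r!)·(P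 ⊙ C^{u_{M−m+1}} ⊙ ⋯ ⊙ C^{u_{M−m+r}})·f_{k−1,m−r}, where ⊙ denotes the entrywise (Hadamard) product of matrices. Then for every vertex i, every k ≥ 1 and every 1 ≤ m ≤ M: f_{k,m}(i) = Σ over all walks (i = i_0 ∼ ⋯ ∼ i_k) of (Π_{q=1}^k 1/deg(i_{q−1})) · Σ_{j ∈ Δ̄_m(k)} (1/j!) · Π_{p=1}^m ⟨u_{M−m+p}, f(i_{j_p}) − f(i_{j_p − 1})⟩; that is, f_{k,m}(i) equals the pairing ⟨u_{M−m+1} ⊗ ⋯ ⊗ u_M, Φ̂_k(i)⟩ of the rank-one degree-m tensor with the level-m expected tensor-exponential feature Φ̂_k(i) = E[exp_⊗(δ₁L)⋯exp_⊗(δₖL) | B₀ = i] of the length-k simple random walk started at i. -/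
/-!
Split a monotone multi-index `j ∈ Δ̄_m(k+1)` according to the number `r` of its entries equal to
`1`: the remaining entries, shifted down by one, form a multi-index in `Δ̄_{m-r}(k)`, and `j!` is
`r!` times its factorial. This is the level-`m` part of
`exp_⊗(v₁) · (exp_⊗(v₂) ⋯ exp_⊗(v_{k+1})) = Σ_r v₁^{⊗r}/r! ⊗ (exp_⊗(v₂) ⋯ exp_⊗(v_{k+1}))_{m-r}`,
paired with a rank-one tensor. Averaging over the first step of the random walk turns it into
exactly the recursion defining `f_{k,m}`, and `f_{k,0} = 𝟙` matches level `0` because `P` is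
stochastic, so induction on `k` identifies the two.
-/

open Finset

section WalkExpectation

variable {ι K : Type*} [Fintype ι] [CommSemiring K]

/-- For stochastic `P`, this is `E_i[g(B_0, …, B_k)]` for the Markov chain with transition matrix
`P`; the tuple `w` lists `B_1, …, B_k` and `Fin.cons i w` is the whole path. -/
def walkExpectation (P : Matrix ι ι K) (k : ℕ) (i : ι) (g : (Fin (k + 1) → ι) → K) : K :=
  ∑ w : Fin k → ι, (∏ q : Fin k, P ((Fin.cons i w : Fin (k + 1) → ι) q.castSucc)
    ((Fin.cons i w : Fin (k + 1) → ι) q.succ)) * g (Fin.cons i w)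

variable (P : Matrix ι ι K)

theorem walkExpectation_zero (i : ι) (g : (Fin 1 → ι) → K) :
    walkExpectation P 0 i g = g fun _ => i := by
  simp only [walkExpectation, univ_unique, Fintype.prod_empty, one_mul, sum_singleton]
  congr 1
  funext q
  rw [Fin.fin_one_eq_zero q, Fin.cons_zero]

theorem walkExpectation_succ (k : ℕ) (i : ι) (g : (Fin (k + 2) → ι) → K) :
    walkExpectation P (k + 1) i g =
      ∑ j, P i j * walkExpectation P k j fun w => g (Fin.cons i w) := by
  rw [walkExpectation, ← (Fin.consEquiv fun _ => ι).sum_comp, Fintype.sum_prod_type]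
  simp only [walkExpectation, Fin.prod_univ_succ, Fin.castSucc_zero, Fin.cons_zero, Fin.cons_succ,
    Fin.castSucc_succ, mul_assoc, mul_sum]
  rfl

theorem walkExpectation_sum {α : Type*} (s : Finset α) (k : ℕ) (i : ι)
    (g : α → (Fin (k + 1) → ι) → K) :
    walkExpectation P k i (fun w => ∑ a ∈ s, g a w) = ∑ a ∈ s, walkExpectation P k i (g a) := by
  simp only [walkExpectation, mul_sum]
  exact sum_comm

theorem walkExpectation_const_mul (k : ℕ) (i : ι) (c : K) (g : (Fin (k + 1) → ι) → K) :
    walkExpectation P k i (fun w => c * g w) = c * walkExpectation P k i g := by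
  simp only [walkExpectation, mul_sum]
  exact sum_congr rfl fun _ _ => mul_left_comm _ _ _

theorem walkExpectation_congr {k : ℕ} {i : ι} {g g' : (Fin (k + 1) → ι) → K}
    (h : ∀ w, w 0 = i → g w = g' w) : walkExpectation P k i g = walkExpectation P k i g' :=
  sum_congr rfl fun w _ => by rw [h _ (Fin.cons_zero _ _)]

theorem walkExpectation_one (hP : ∀ i, ∑ j, P i j = 1) (k : ℕ) (i : ι) :
    walkExpectation P k i (fun _ => 1) = 1 := by
  induction k generalizing i with
  | zero => exact walkExpectation_zero P i _
  | succ k ih => simp only [walkExpectation_succ, ih, mul_one, hP]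

theorem sum_walks_eq_walkExpectation [DecidableEq ι] (R : ι → ι → Prop) [DecidableRel R]
    (c : ι → ι → K) (hP : ∀ i j, P i j = if R i j then c i j else 0) (k : ℕ) (i : ι)
    (g : (Fin (k + 1) → ι) → K) :
    ∑ w ∈ univ.filter (fun w : Fin (k + 1) → ι =>
        w 0 = i ∧ ∀ q : Fin k, R (w q.castSucc) (w q.succ)),
      (∏ q : Fin k, c (w q.castSucc) (w q.succ)) * g w = walkExpectation P k i g := by
  rw [sum_filter, ← (Fin.consEquiv fun _ => ι).sum_comp, Fintype.sum_prod_type]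
  simp only [Fin.consEquiv_apply, Fin.cons_zero, Fin.cons_succ]
  rw [Fintype.sum_eq_single i fun a ha => sum_eq_zero fun w _ => if_neg fun h => ha h.1]
  refine sum_congr rfl fun w _ => ?_
  simp only [true_and, hP, Fin.cons_succ, prod_ite_zero, mem_univ, forall_const]
  split_ifs
  exacts [rfl, (zero_mul _).symm]

end WalkExpectation

section MultiIndex

variable {m k : ℕ}

def multiFactorial (jj : Fin m → Fin k) : ℕ :=
  ∏ v ∈ univ.image jj, (#{p | jj p = v}).factorial

theorem multiFactorial_eq_prod_univ (jj : Fin m → Fin k) :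
    multiFactorial jj = ∏ v, (#{p | jj p = v}).factorial := by
  refine prod_subset (subset_univ _) fun v _ hv => ?_
  rw [filter_false_of_mem fun p _ (hp : jj p = v) => hv (hp ▸ mem_image_of_mem jj (mem_univ p)),
    card_empty, Nat.factorial_zero]

theorem Monotone.eq_zero_iff_lt_card {jj : Fin m → Fin (k + 1)} (hjj : Monotone jj) (p : Fin m) :
    jj p = 0 ↔ (p : ℕ) < #{q | jj q = 0} := by
  constructor
  · intro hp
    have hsub : Iic p ⊆ ({q | jj q = 0} : Finset (Fin m)) := fun q hq => by
      simp only [mem_filter, mem_univ, true_and]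
      exact Fin.le_zero_iff.mp (hp ▸ hjj (mem_Iic.mp hq))
    have := card_le_card hsub
    rw [Fin.card_Iic] at this
    omega
  · intro hlt
    by_contra hp
    have hsub : ({q | jj q = 0} : Finset (Fin m)) ⊆ Iio p := fun q hq => by
      simp only [mem_filter, mem_univ, true_and] at hq
      by_contra hpq
      exact hp (Fin.le_zero_iff.mp (hq ▸ hjj (not_lt.mp (mem_Iio.not.mp hpq))))
    have := card_le_card hsub
    rw [Fin.card_Iio] at this
    omega

def prependZeros (r : ℕ) (jj : Fin (m - r) → Fin k) : Fin m → Fin (k + 1) :=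
  fun p => if h : (p : ℕ) < r then 0 else (jj ⟨p - r, by omega⟩).succ

variable {r : ℕ} {jj : Fin (m - r) → Fin k}

theorem prependZeros_eq_zero_iff (p : Fin m) : prependZeros r jj p = 0 ↔ (p : ℕ) < r := by
  unfold prependZeros
  split_ifs with h <;> simp [h, Fin.succ_ne_zero]

theorem prependZeros_add (q : Fin (m - r)) :
    prependZeros r jj ⟨r + q, by omega⟩ = (jj q).succ := by
  simp [prependZeros]

theorem prependZeros_of_le {p : Fin m} (hp : r ≤ (p : ℕ)) :
    prependZeros r jj p = (jj ⟨p - r, by omega⟩).succ := by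
  simp [prependZeros, not_lt.mpr hp]

theorem prependZeros_injective (r : ℕ) : Function.Injective (prependZeros (m := m) (k := k) r) :=
  fun jj jj' h => funext fun q => Fin.succ_injective _ <| by
    rw [← prependZeros_add, ← prependZeros_add, h]

theorem monotone_prependZeros (hjj : Monotone jj) : Monotone (prependZeros r jj) := by
  intro p p' hpp
  have := Fin.le_def.mp hpp
  unfold prependZeros
  split_ifs with h h'
  · exact le_rfl
  · exact Fin.zero_le _
  · omega
  · exact Fin.succ_le_succ_iff.mpr (hjj (Fin.le_def.mpr (by simp only; omega)))

theorem card_prependZeros_eq_zero (hr : r ≤ m) : #{p | prependZeros r jj p = 0} = r := by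
  simp only [prependZeros_eq_zero_iff, Fin.card_filter_val_lt]
  omega

theorem card_prependZeros_eq_succ (v : Fin k) :
    #{p | prependZeros r jj p = v.succ} = #{q | jj q = v} := by
  symm
  refine card_bij (fun q _ => ⟨r + q, by omega⟩) (fun q hq => ?_) (fun q _ q' _ h => ?_)
    (fun p hp => ?_)
  · simp only [mem_filter, mem_univ, true_and] at hq ⊢
    rw [prependZeros_add, hq]
  · simpa [Fin.ext_iff] using h
  · simp only [mem_filter, mem_univ, true_and] at hp
    have hrp : r ≤ (p : ℕ) := not_lt.mp fun h =>
      Fin.succ_ne_zero v (hp ▸ (prependZeros_eq_zero_iff p).mpr h)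
    rw [prependZeros_of_le hrp] at hp
    exact ⟨⟨p - r, by omega⟩, by simpa using Fin.succ_injective _ hp, Fin.ext (by simp; omega)⟩

theorem multiFactorial_prependZeros (hr : r ≤ m) :
    multiFactorial (prependZeros r jj) = r.factorial * multiFactorial jj := by
  simp only [multiFactorial_eq_prod_univ, Fin.prod_univ_succ, card_prependZeros_eq_zero hr,
    card_prependZeros_eq_succ]

theorem prod_prependZeros {M : Type*} [CommMonoid M] (hr : r ≤ m) (x : ℕ → Fin (k + 1) → M) :
    ∏ p : Fin m, x p (prependZeros r jj p) =
      (∏ p ∈ range r, x p 0) * ∏ q : Fin (m - r), x (r + q) (jj q).succ := by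
  rw [← Fin.prod_congr' _ (Nat.add_sub_of_le hr), Fin.prod_univ_add, ← Fin.prod_univ_eq_prod_range]
  congr 1
  · refine prod_congr rfl fun p _ => ?_
    simp [(prependZeros_eq_zero_iff _).mpr]
  · refine prod_congr rfl fun q _ => ?_
    simp only [Fin.cast, Fin.natAdd]
    rw [prependZeros_add]

theorem Monotone.exists_prependZeros {jj : Fin m → Fin (k + 1)} (hjj : Monotone jj) :
    ∃ jj' : Fin (m - #{p | jj p = 0}) → Fin k,
      Monotone jj' ∧ prependZeros #{p | jj p = 0} jj' = jj := by
  set r := #{p | jj p = 0} with hr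
  have hne (q : Fin (m - r)) : jj ⟨r + q, by omega⟩ ≠ 0 := fun h => by
    have := (hjj.eq_zero_iff_lt_card _).mp h
    rw [← hr] at this
    simp at this
  refine ⟨fun q => (jj ⟨r + q, by omega⟩).pred (hne q), fun q q' h => ?_, funext fun p => ?_⟩
  · exact Fin.pred_le_pred_iff.mpr (hjj (Fin.le_def.mpr (by simpa using h)))
  · unfold prependZeros
    split_ifs with h
    · exact ((hjj.eq_zero_iff_lt_card p).mpr h).symm
    · rw [Fin.succ_pred]
      exact congrArg jj (Fin.ext (by simp only; omega))

theorem sum_monotone_eq_sum_prependZeros {M : Type*} [AddCommMonoid M]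
    (T : (Fin m → Fin (k + 1)) → M) :
    ∑ jj ∈ univ.filter (fun jj : Fin m → Fin (k + 1) => Monotone jj), T jj =
      ∑ r ∈ range (m + 1), ∑ jj ∈ univ.filter (fun jj : Fin (m - r) → Fin k => Monotone jj),
        T (prependZeros r jj) := by
  have hmaps : ∀ jj ∈ univ.filter (fun jj : Fin m → Fin (k + 1) => Monotone jj),
      #{p | jj p = 0} ∈ range (m + 1) :=
    fun jj _ => mem_range.mpr (Nat.lt_succ_of_le ((card_filter_le _ _).trans_eq (card_fin m)))
  rw [← sum_fiberwise_of_maps_to hmaps]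
  refine sum_congr rfl fun r hr => ?_
  rw [← sum_image (prependZeros_injective r).injOn]
  congr 1
  ext jj
  simp only [mem_image, mem_filter, mem_univ, true_and]
  constructor
  · rintro ⟨hjj, rfl⟩
    exact hjj.exists_prependZeros
  · rintro ⟨jj', hjj', rfl⟩
    exact ⟨monotone_prependZeros hjj',
      card_prependZeros_eq_zero (Nat.lt_succ_iff.mp (mem_range.mp hr))⟩

end MultiIndex

section TensorExp

variable {K : Type*} [Field K]

/-- The pairing of `u_0 ⊗ ⋯ ⊗ u_{m-1}` with the level-`m` part of
`exp_⊗(v_0) ⋯ exp_⊗(v_{k-1})`, where `x p q = ⟨u_p, v_q⟩`. -/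
def tensorExpPairing {k : ℕ} (x : ℕ → Fin k → K) (m : ℕ) : K :=
  ∑ jj ∈ univ.filter (fun jj : Fin m → Fin k => Monotone jj),
    ((multiFactorial jj : ℕ) : K)⁻¹ * ∏ p : Fin m, x p (jj p)

theorem tensorExpPairing_zero_level {k : ℕ} (x : ℕ → Fin k → K) : tensorExpPairing x 0 = 1 := by
  simp [tensorExpPairing, multiFactorial, Subsingleton.monotone]

theorem tensorExpPairing_zero_steps (x : ℕ → Fin 0 → K) {m : ℕ} (hm : m ≠ 0) :
    tensorExpPairing x m = 0 := by
  obtain ⟨m, rfl⟩ := Nat.exists_eq_succ_of_ne_zero hm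
  simp [tensorExpPairing]

theorem tensorExpPairing_succ_steps {k : ℕ} (x : ℕ → Fin (k + 1) → K) (m : ℕ) :
    tensorExpPairing x m = ∑ r ∈ range (m + 1), (r.factorial : K)⁻¹ * (∏ p ∈ range r, x p 0) *
      tensorExpPairing (fun p q => x (r + p) q.succ) (m - r) := by
  rw [tensorExpPairing, sum_monotone_eq_sum_prependZeros]
  refine sum_congr rfl fun r hr => ?_
  have hr : r ≤ m := Nat.lt_succ_iff.mp (mem_range.mp hr)
  rw [tensorExpPairing, mul_sum]
  refine sum_congr rfl fun jj _ => ?_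
  rw [multiFactorial_prependZeros hr, prod_prependZeros hr, Nat.cast_mul, mul_inv]
  ring

end TensorExp

section Expected

variable {ι K : Type*} [Fintype ι] [Field K] (P : Matrix ι ι K)

def expectedTensorExpPairing (y : ℕ → ι → ι → K) (k m : ℕ) (i : ι) : K :=
  walkExpectation P k i fun w =>
    tensorExpPairing (fun p (q : Fin k) => y p (w q.castSucc) (w q.succ)) m

theorem expectedTensorExpPairing_zero_level (hP : ∀ i, ∑ j, P i j = 1) (y : ℕ → ι → ι → K)
    (k : ℕ) (i : ι) : expectedTensorExpPairing P y k 0 i = 1 := by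
  simp only [expectedTensorExpPairing, tensorExpPairing_zero_level, walkExpectation_one P hP]

theorem expectedTensorExpPairing_zero_steps (y : ℕ → ι → ι → K) {m : ℕ} (hm : m ≠ 0) (i : ι) :
    expectedTensorExpPairing P y 0 m i = 0 := by
  simp only [expectedTensorExpPairing, tensorExpPairing_zero_steps _ hm, walkExpectation_zero]

theorem expectedTensorExpPairing_succ_steps (y : ℕ → ι → ι → K) (k m : ℕ) (i : ι) :
    expectedTensorExpPairing P y (k + 1) m i =
      ∑ r ∈ range (m + 1), (r.factorial : K)⁻¹ * ∑ j, P i j * (∏ p ∈ range r, y p i j) *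
        expectedTensorExpPairing P (fun p => y (r + p)) k (m - r) j := by
  have hstep (j : ι) :
      (walkExpectation P k j fun w => tensorExpPairing (fun p (q : Fin (k + 1)) =>
        y p ((Fin.cons i w : Fin (k + 2) → ι) q.castSucc)
          ((Fin.cons i w : Fin (k + 2) → ι) q.succ)) m) =
      ∑ r ∈ range (m + 1), (r.factorial : K)⁻¹ * (∏ p ∈ range r, y p i j) *
        expectedTensorExpPairing P (fun p => y (r + p)) k (m - r) j := by
    rw [walkExpectation_congr P (g' := fun w => ∑ r ∈ range (m + 1),
      (r.factorial : K)⁻¹ * (∏ p ∈ range r, y p i j) *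
        tensorExpPairing (fun p (q : Fin k) => y (r + p) (w q.castSucc) (w q.succ)) (m - r))]
    · simp only [walkExpectation_sum, walkExpectation_const_mul, expectedTensorExpPairing]
    · intro w hw
      rw [tensorExpPairing_succ_steps]
      simp [hw]
  simp only [expectedTensorExpPairing, walkExpectation_succ, hstep, mul_sum]
  rw [sum_comm]
  exact sum_congr rfl fun _ _ => sum_congr rfl fun _ _ => by ring

theorem eq_expectedTensorExpPairing_of_recursion (hP : ∀ i, ∑ j, P i j = 1)
    (y : ℕ → ι → ι → K) (M : ℕ) (A : ℕ → ℕ → Matrix ι ι K)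
    (hA : ∀ m r i j, A m r i j = P i j * ∏ p ∈ range r, y (M - m + p) i j)
    (F : ℕ → ℕ → ι → K) (hF0 : ∀ k, F k 0 = fun _ => 1)
    (hF1 : ∀ m, 1 ≤ m → m ≤ M → F 1 m = (m.factorial : K)⁻¹ • (A m m).mulVec fun _ => 1)
    (hFrec : ∀ k, 2 ≤ k → ∀ m, 1 ≤ m → m ≤ M →
      F k m = P.mulVec (F (k - 1) m) +
        ∑ r ∈ Icc 1 m, (r.factorial : K)⁻¹ • (A m r).mulVec (F (k - 1) (m - r)))
    (k m : ℕ) (hm : m ≤ M) :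
    F (k + 1) m = expectedTensorExpPairing P (fun p => y (M - m + p)) (k + 1) m := by
  have hshift (l r : ℕ) (hl : l ≤ M) (hr : r ≤ l) :
      (fun p => y (M - l + (r + p))) = fun p => y (M - (l - r) + p) :=
    funext fun p => congrArg y (by omega)
  have hlevel_zero (k : ℕ) : F k 0 = expectedTensorExpPairing P (fun p => y (M - 0 + p)) k 0 :=
    funext fun i => by rw [hF0, expectedTensorExpPairing_zero_level P hP]
  induction k generalizing m with
  | zero =>
    rcases Nat.eq_zero_or_pos m with rfl | hm1
    · exact hlevel_zero _
    funext i
    rw [hF1 m hm1 hm, expectedTensorExpPairing_succ_steps,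
      sum_eq_single_of_mem m (self_mem_range_succ m)]
    · simp only [Pi.smul_apply, Matrix.mulVec, dotProduct, hA, mul_one, smul_eq_mul, tsub_self,
        expectedTensorExpPairing_zero_level P hP]
    · intro r hr hrm
      rw [mem_range] at hr
      simp only [expectedTensorExpPairing_zero_steps P _ (show m - r ≠ 0 by omega), mul_zero,
        sum_const_zero]
  | succ k ih =>
    rcases Nat.eq_zero_or_pos m with rfl | hm1
    · exact hlevel_zero _
    funext i
    rw [hFrec (k + 2) (by omega) m hm1 hm, expectedTensorExpPairing_succ_steps, range_eq_Ico,
      sum_eq_sum_Ico_succ_bot (by omega)]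
    simp only [Nat.add_one_sub_one, Pi.add_apply, Matrix.mulVec, dotProduct, Finset.sum_apply,
      Pi.smul_apply, hA, smul_eq_mul, Nat.factorial_zero, Nat.cast_one, inv_one, range_zero,
      prod_empty, mul_one, zero_add, tsub_zero, one_mul, ih m hm, Ico_add_one_right_eq_Icc]
    refine congrArg _ (sum_congr rfl fun r hr => ?_)
    rw [mem_Icc] at hr
    rw [hshift m r hm hr.2, ih (m - r) (by omega)]

end Expected

theorem prod_Icc_one_eq_prod_range {M : Type*} [CommMonoid M] (g : ℕ → M) (r : ℕ) :
    ∏ s ∈ Icc 1 r, g s = ∏ p ∈ range r, g (p + 1) := by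
  rw [range_eq_Ico, prod_Ico_add', zero_add, Ico_add_one_right_eq_Icc]

open scoped Classical in
theorem graph_low_rank_functional_general
    {n d : ℕ} (G : SimpleGraph (Fin n)) [DecidableRel G.Adj]
    (hdeg : ∀ i, 1 ≤ G.degree i)
    (f : Fin n → Fin d → ℝ)
    (M : ℕ) (u : ℕ → Fin d → ℝ)
    (P : Matrix (Fin n) (Fin n) ℝ)
    (hP : ∀ i j, P i j = if G.Adj i j then ((G.degree i : ℝ))⁻¹ else 0)
    (C : (Fin d → ℝ) → Matrix (Fin n) (Fin n) ℝ)
    (hC : ∀ v i j, C v i j = if G.Adj i j then ∑ a : Fin d, v a * (f j a - f i a) else 0)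
    (F : ℕ → ℕ → Fin n → ℝ)
    (hF0 : ∀ k, F k 0 = fun _ => 1)
    (hF1 : ∀ m, 1 ≤ m → m ≤ M →
      F 1 m = ((m.factorial : ℝ))⁻¹ •
        (Matrix.of fun i j =>
          P i j * ∏ s ∈ Finset.Icc 1 m, C (u (M - m + s)) i j).mulVec fun _ => 1)
    (hFrec : ∀ k, 2 ≤ k → ∀ m, 1 ≤ m → m ≤ M →
      F k m = P.mulVec (F (k - 1) m)
        + ∑ r ∈ Finset.Icc 1 m, ((r.factorial : ℝ))⁻¹ •
            (Matrix.of fun i j =>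
              P i j * ∏ s ∈ Finset.Icc 1 r, C (u (M - m + s)) i j).mulVec
              (F (k - 1) (m - r))) :
    ∀ (i : Fin n) (k m : ℕ), 1 ≤ k → 1 ≤ m → m ≤ M →
      F k m i =
        ∑ wk ∈ Finset.univ.filter (fun wk : Fin (k + 1) → Fin n =>
              wk 0 = i ∧ ∀ q : Fin k, G.Adj (wk q.castSucc) (wk q.succ)),
          (∏ q : Fin k, ((G.degree (wk q.castSucc) : ℝ))⁻¹) *
            ∑ jj ∈ Finset.univ.filter (fun jj : Fin m → Fin k => Monotone jj),
              (((∏ v ∈ Finset.univ.image jj,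
                    (Finset.univ.filter fun pp => jj pp = v).card.factorial : ℕ) : ℝ))⁻¹ *
                ∏ pp : Fin m, ∑ a : Fin d, u (M - m + (pp : ℕ) + 1) a *
                  (f (wk (jj pp).succ) a - f (wk (jj pp).castSucc) a) := by
  intro i k m hk _ hm
  obtain ⟨k, rfl⟩ := Nat.exists_eq_add_of_le' hk
  have hstoch (a : Fin n) : ∑ b, P a b = 1 := by
    have := hdeg a
    simp only [hP, sum_ite, sum_const_zero, add_zero, sum_const, nsmul_eq_mul,
      ← SimpleGraph.neighborFinset_eq_filter, SimpleGraph.card_neighborFinset_eq_degree]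
    field_simp
  have hA (m r : ℕ) (a b : Fin n) :
      (Matrix.of fun i j => P i j * ∏ s ∈ Icc 1 r, C (u (M - m + s)) i j) a b =
        P a b * ∏ p ∈ range r, ∑ t, u (M - m + p + 1) t * (f b t - f a t) := by
    by_cases hab : G.Adj a b
    · simp only [Matrix.of_apply, hC, if_pos hab, prod_Icc_one_eq_prod_range]
      rfl
    · simp only [Matrix.of_apply, hP, if_neg hab, zero_mul]
  rw [sum_walks_eq_walkExpectation P G.Adj (fun a _ => ((G.degree a : ℝ))⁻¹) hP]
  exact congrFun (eq_expectedTensorExpPairing_of_recursion P hstoch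
    (fun s a b => ∑ t, u (s + 1) t * (f b t - f a t)) M _ hA F hF0 hF1 hFrec k m hm) i

open scoped Classical in
/-- **Low-rank recursive algorithm for expected signature features of graph random walks.**
Let `G` be a finite labelled graph on `{1, …, n}` with all degrees `≥ 1`, node attributes
`f : V → ℝ^d`, `P` the random-walk transition matrix and, for `u ∈ ℝ^d`,
`C^u i j = ⟨u, f j - f i⟩` for `i ∼ j` (`0` otherwise). Let `f_{k,m}` satisfy the
recursion `f_{k,0} = 𝟙`, `f_{1,m} = (1/m!) (P ⊙ C^{u_{M-m+1}} ⊙ ⋯ ⊙ C^{u_M}) 𝟙` and, for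
`k ≥ 2`, `f_{k,m} = P f_{k-1,m} + Σ_{r=1}^m (1/r!) (P ⊙ C^{u_{M-m+1}} ⊙ ⋯ ⊙ C^{u_{M-m+r}})
f_{k-1,m-r}` (`⊙` = entrywise product). Then for every vertex `i`, `k ≥ 1`, `1 ≤ m ≤ M`,
`f_{k,m}(i)` equals the sum over all length-`k` walks from `i` of
`(Π_q 1/deg i_{q-1}) Σ_{j ∈ Δ̄_m(k)} (1/j!) Π_{p=1}^m ⟨u_{M-m+p}, f i_{j_p} - f i_{j_p - 1}⟩`,
i.e. the pairing of the rank-one tensor `u_{M-m+1} ⊗ ⋯ ⊗ u_M` with the level-`m`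
expected tensor-exponential feature of the length-`k` simple random walk started at `i`.
(Here `Δ̄_m(k)` is the set of non-decreasing multi-indices `1 ≤ j_1 ≤ ⋯ ≤ j_m ≤ k`, and
`j! = p_1! ⋯ p_s!` where `p_1, …, p_s` are the multiplicities of the distinct values.) -/
theorem graph_low_rank_functional
    {n d : ℕ} (G : SimpleGraph (Fin n)) [DecidableRel G.Adj]
    (hdeg : ∀ i, 1 ≤ G.degree i)
    (f : Fin n → Fin d → ℝ)
    (M : ℕ) (hM : 1 ≤ M) (u : ℕ → Fin d → ℝ)
    (P : Matrix (Fin n) (Fin n) ℝ)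
    (hP : ∀ i j, P i j = if G.Adj i j then ((G.degree i : ℝ))⁻¹ else 0)
    (C : (Fin d → ℝ) → Matrix (Fin n) (Fin n) ℝ)
    (hC : ∀ v i j, C v i j = if G.Adj i j then ∑ a : Fin d, v a * (f j a - f i a) else 0)
    (F : ℕ → ℕ → Fin n → ℝ)
    (hF0 : ∀ k, F k 0 = fun _ => 1)
    (hF1 : ∀ m, 1 ≤ m → m ≤ M →
      F 1 m = ((m.factorial : ℝ))⁻¹ •
        (Matrix.of fun i j =>
          P i j * ∏ s ∈ Finset.Icc 1 m, C (u (M - m + s)) i j).mulVec fun _ => 1)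
    (hFrec : ∀ k, 2 ≤ k → ∀ m, 1 ≤ m → m ≤ M →
      F k m = P.mulVec (F (k - 1) m)
        + ∑ r ∈ Finset.Icc 1 m, ((r.factorial : ℝ))⁻¹ •
            (Matrix.of fun i j =>
              P i j * ∏ s ∈ Finset.Icc 1 r, C (u (M - m + s)) i j).mulVec
              (F (k - 1) (m - r))) :
    ∀ (i : Fin n) (k m : ℕ), 1 ≤ k → 1 ≤ m → m ≤ M →
      F k m i =
        ∑ wk ∈ Finset.univ.filter (fun wk : Fin (k + 1) → Fin n =>
              wk 0 = i ∧ ∀ q : Fin k, G.Adj (wk q.castSucc) (wk q.succ)),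
          (∏ q : Fin k, ((G.degree (wk q.castSucc) : ℝ))⁻¹) *
            ∑ jj ∈ Finset.univ.filter (fun jj : Fin m → Fin k => Monotone jj),
              (((∏ v ∈ Finset.univ.image jj,
                    (Finset.univ.filter fun pp => jj pp = v).card.factorial : ℕ) : ℝ))⁻¹ *
                ∏ pp : Fin m, ∑ a : Fin d, u (M - m + (pp : ℕ) + 1) a *
                  (f (wk (jj pp).succ) a - f (wk (jj pp).castSucc) a) :=
  graph_low_rank_functional_general G hdeg f M u P hP C hC F hF0 hF1 hFrec
end

section
/- Let V be a real inner product space, φ : X → V a map, x_1, …, x_L ∈ X a finite sequence, M ≥ 0, and for each 0 ≤ m ≤ M let v_1^m, …, v_m^m ∈ V (defining the rank-one degree-m tensor ℓ_m = v_1^m ⊗ ⋯ ⊗ v_m^m). Define scalars A^{(m)}_{j,l} by the recursion A^{(m)}_{0,l} = 1 for all l ≥ 0, A^{(m)}_{j,0} = 0 for all j ≥ 1, and A^{(m)}_{j,l} = A^{(m)}_{j,l−1} + A^{(m)}_{j−1,l−1}·⟨v_j^m, φ(x_l)⟩ for 1 ≤ j ≤ m and 1 ≤ l ≤ L. Then A^{(m)}_{j,l}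 = Σ_{i ∈ Δ_j(l)} Π_{p=1}^{j} ⟨v_p^m, φ(x_{i_p})⟩ for all 0 ≤ j ≤ m and 0 ≤ l ≤ L; in particular the evaluation of the rank-one, truncation-M linear functional ℓ = (ℓ_0, ℓ_1, …, ℓ_M, 0, …) against the Seq2Tens map satisfies ⟨ℓ, Φ(x_1, …, x_L)⟩ = Σ_{m=0}^M A^{(m)}_{m,L} = Σ_{m=0}^M Σ_{i ∈ Δ_m(L)} Π_{k=1}^m ⟨v_k^m, φ(x_{i_k})⟩, so it can be computed by inner-product evaluations alone. -/
/-!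
Writing `g a b = ⟨v_{a+1}, φ(x_{b+1})⟩`, the sums `S_{j,l}` of `∏_p g p (i p)` over strictly
increasing `i : Fin j → Fin l` satisfy the same recursion as `A`: a strictly increasing
`i : Fin (j+1) → Fin (l+1)` either misses the top value `l`, and is then a strictly increasing map
into `Fin l`, or takes it at its last position, and is then a strictly increasing `Fin j → Fin l`
extended by `l`. Since the recursion determines its solution from the boundary values,
`A^{(m)}_{j,l} = S_{j,l}`.
-/

open Finset

theorem Fin.strictMono_snoc {α : Type*} [Preorder α] {n : ℕ} {f : Fin n → α} {a : α}
    (hf : StrictMono f) (ha : ∀ p, f p < a) :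
    StrictMono (Fin.snoc (α := fun _ => α) f a) := by
  intro p q hpq
  obtain ⟨p, rfl⟩ := Fin.exists_castSucc_eq.mpr (Fin.ne_last_of_lt hpq)
  induction q using Fin.lastCases with
  | last => simpa using ha p
  | cast q => simpa using hf (Fin.castSucc_lt_castSucc_iff.mp hpq)

section StrictMonoProdSum

variable {R : Type*} [CommSemiring R]

open scoped Classical in
noncomputable def strictMonoProdSum (g : ℕ → ℕ → R) (j l : ℕ) : R :=
  ∑ i ∈ univ.filter (fun i : Fin j → Fin l => StrictMono i), ∏ p : Fin j, g p (i p)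

theorem strictMonoProdSum_zero_left (g : ℕ → ℕ → R) (l : ℕ) : strictMonoProdSum g 0 l = 1 := by
  simp [strictMonoProdSum, Subsingleton.strictMono]

theorem strictMonoProdSum_succ_zero (g : ℕ → ℕ → R) (j : ℕ) :
    strictMonoProdSum g (j + 1) 0 = 0 := by
  simp [strictMonoProdSum]

open scoped Classical in
theorem sum_strictMono_ne_last_prod (g : ℕ → ℕ → R) (j l : ℕ) :
    ∑ i ∈ univ.filter (fun i : Fin (j + 1) → Fin (l + 1) =>
        StrictMono i ∧ i (Fin.last j) ≠ Fin.last l), ∏ p : Fin (j + 1), g p (i p) =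
      strictMonoProdSum g (j + 1) l := by
  symm
  refine sum_nbij (Fin.castSucc ∘ ·) ?_ ?_ ?_ (fun _ _ => rfl)
  · intro i hi
    simp only [mem_filter, mem_univ, true_and] at hi ⊢
    exact ⟨Fin.strictMono_castSucc.comp hi, (Fin.castSucc_lt_last _).ne⟩
  · exact fun i _ i' _ h => funext fun p => Fin.castSucc_injective _ (congrFun h p)
  · intro i hi
    simp only [mem_coe, mem_filter, mem_univ, true_and] at hi
    have h_lt_last p : i p ≠ Fin.last l :=
      ((hi.1.monotone (Fin.le_last p)).trans_lt ((Fin.le_last _).lt_of_ne hi.2)).ne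
    choose i' hi' using fun p => Fin.exists_castSucc_eq.mpr (h_lt_last p)
    refine ⟨i', ?_, funext hi'⟩
    simp only [mem_coe, mem_filter, mem_univ, true_and]
    intro p q hpq
    rw [← Fin.castSucc_lt_castSucc_iff, hi', hi']
    exact hi.1 hpq

open scoped Classical in
theorem sum_strictMono_eq_last_prod (g : ℕ → ℕ → R) (j l : ℕ) :
    ∑ i ∈ univ.filter (fun i : Fin (j + 1) → Fin (l + 1) =>
        StrictMono i ∧ i (Fin.last j) = Fin.last l), ∏ p : Fin (j + 1), g p (i p) =
      strictMonoProdSum g j l * g j l := by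
  symm
  rw [strictMonoProdSum, sum_mul]
  refine sum_nbij (fun i => Fin.snoc (α := fun _ => Fin (l + 1)) (Fin.castSucc ∘ i) (Fin.last l))
    ?_ ?_ ?_ ?_
  · intro i hi
    simp only [mem_filter, mem_univ, true_and] at hi ⊢
    exact ⟨Fin.strictMono_snoc (Fin.strictMono_castSucc.comp hi) fun _ => Fin.castSucc_lt_last _,
      Fin.snoc_last _ _⟩
  · intro i _ i' _ h
    funext p
    simpa using congrFun h p.castSucc
  · intro i hi
    simp only [mem_coe, mem_filter, mem_univ, true_and] at hi
    have h_lt_last (p : Fin j) : i p.castSucc ≠ Fin.last l :=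
      (hi.2 ▸ hi.1 (Fin.castSucc_lt_last p)).ne
    choose i' hi' using fun p => Fin.exists_castSucc_eq.mpr (h_lt_last p)
    refine ⟨i', ?_, ?_⟩
    · simp only [mem_coe, mem_filter, mem_univ, true_and]
      intro p q hpq
      rw [← Fin.castSucc_lt_castSucc_iff, hi', hi']
      exact hi.1 (Fin.castSucc_lt_castSucc_iff.mpr hpq)
    · rw [← Fin.snoc_init_self i, hi.2]
      exact congrArg (Fin.snoc · _) (funext hi')
  · intro i _
    simp [Fin.prod_univ_castSucc]

theorem strictMonoProdSum_succ_succ (g : ℕ → ℕ → R) (j l : ℕ) :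
    strictMonoProdSum g (j + 1) (l + 1) =
      strictMonoProdSum g (j + 1) l + strictMonoProdSum g j l * g j l := by
  classical
  rw [strictMonoProdSum, ← sum_filter_add_sum_filter_not _ (fun i => i (Fin.last j) = Fin.last l),
    filter_filter, filter_filter, add_comm]
  convert congrArg₂ (· + ·) (sum_strictMono_ne_last_prod g j l) (sum_strictMono_eq_last_prod g j l)
    using 3

theorem eq_strictMonoProdSum_of_recursion {B : ℕ → ℕ → R} {g : ℕ → ℕ → R} {m L : ℕ}
    (h_zero_left : ∀ l, B 0 l = 1) (h_succ_zero : ∀ j, B (j + 1) 0 = 0)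
    (h_succ_succ : ∀ j l, j < m → l < L → B (j + 1) (l + 1) = B (j + 1) l + B j l * g j l) :
    ∀ j ≤ m, ∀ l ≤ L, B j l = strictMonoProdSum g j l := by
  intro j hj l hl
  induction l generalizing j with
  | zero => cases j <;> simp [h_zero_left, h_succ_zero, strictMonoProdSum_zero_left,
      strictMonoProdSum_succ_zero]
  | succ l ih =>
    cases j with
    | zero => rw [h_zero_left, strictMonoProdSum_zero_left]
    | succ j =>
      rw [h_succ_succ j l hj hl, strictMonoProdSum_succ_succ, ih (j + 1) hj (by omega),
        ih j (by omega) (by omega)]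

end StrictMonoProdSum

open scoped Classical in
/-- **Recursive evaluation of rank-one functionals of the Seq2Tens map.** Let `V` be a real
inner product space, `φ : X → V`, `x_1, …, x_L` a sequence in `X`, and for `0 ≤ m ≤ M` let
`v_1^m, …, v_m^m ∈ V` (the components of the rank-one degree-`m` tensor
`ℓ_m = v_1^m ⊗ ⋯ ⊗ v_m^m`). If the scalars `A^{(m)}_{j,l}` satisfy
`A^{(m)}_{0,l} = 1`, `A^{(m)}_{j,0} = 0` for `j ≥ 1`, and
`A^{(m)}_{j,l} = A^{(m)}_{j,l-1} + A^{(m)}_{j-1,l-1} ⟨v_j^m, φ(x_l)⟩`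
for `1 ≤ j ≤ m`, `1 ≤ l ≤ L`, then
`A^{(m)}_{j,l} = Σ_{i ∈ Δ_j(l)} Π_{p=1}^j ⟨v_p^m, φ(x_{i_p})⟩`, and in particular the
rank-one truncation-`M` linear functional `ℓ = (ℓ_0, …, ℓ_M, 0, …)` evaluated on the
Seq2Tens map satisfies `⟨ℓ, Φ(x_1, …, x_L)⟩ = Σ_{m=0}^M A^{(m)}_{m,L}
= Σ_{m=0}^M Σ_{i ∈ Δ_m(L)} Π_{k=1}^m ⟨v_k^m, φ(x_{i_k})⟩`, so it can be computed by
inner-product evaluations alone. (Here `Δ_j(l)` is the set of strictly increasing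
multi-indices `1 ≤ i_1 < ⋯ < i_j ≤ l`.) -/
theorem seq2tens_rank_one_recursion
    {V : Type*} [NormedAddCommGroup V] [InnerProductSpace ℝ V]
    {X : Type*} (φ : X → V) (L M : ℕ) (x : ℕ → X)
    (v : ℕ → ℕ → V) (A : ℕ → ℕ → ℕ → ℝ)
    (hA0 : ∀ m l, A m 0 l = 1)
    (hAj0 : ∀ m j, 1 ≤ j → A m j 0 = 0)
    (hArec : ∀ m j l, 1 ≤ j → j ≤ m → 1 ≤ l → l ≤ L →
      A m j l = A m j (l - 1) + A m (j - 1) (l - 1) * (inner ℝ (v m j) (φ (x l)) : ℝ)) :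
    (∀ m ≤ M, ∀ j ≤ m, ∀ l ≤ L,
      A m j l = ∑ i ∈ Finset.univ.filter (fun i : Fin j → Fin l => StrictMono i),
        ∏ p : Fin j, (inner ℝ (v m ((p : ℕ) + 1)) (φ (x ((i p : ℕ) + 1))) : ℝ))
    ∧ ∑ m ∈ Finset.range (M + 1), A m m L
        = ∑ m ∈ Finset.range (M + 1),
            ∑ i ∈ Finset.univ.filter (fun i : Fin m → Fin L => StrictMono i),
              ∏ p : Fin m, (inner ℝ (v m ((p : ℕ) + 1)) (φ (x ((i p : ℕ) + 1))) : ℝ) := by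
  have hA : ∀ m, ∀ j ≤ m, ∀ l ≤ L, A m j l =
      strictMonoProdSum (fun a b => inner ℝ (v m (a + 1)) (φ (x (b + 1)))) j l := fun m =>
    eq_strictMonoProdSum_of_recursion (hA0 m) (fun j => hAj0 m (j + 1) j.succ_pos)
      fun j l hj hl => by simpa using hArec m (j + 1) (l + 1) (by omega) hj (by omega) hl
  exact ⟨fun m _ j hj l hl => hA m j hj l hl,
    sum_congr rfl fun m _ => hA m m le_rfl L le_rfl⟩
end
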